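/- arXiv:2104.14880 — 7 statements merged into one kernel-verified Lean document; each statement's English description precedes it below -/
import Mathlib

section
/- For any A ∈ SL(2,ℂ), the trace of A · conj(A) is at least −2; that is, tr(A · conj(A)) ∈ [−2, ∞). -/
/-! Writing `A = !![a, b; c, d]`, the trace of `A * conj A` is the real number
`|a|² + |d|² + 2 Re (b c̄)`. Since `bc = ad - 1`, we get `Re (b c̄) ≥ -|b||c| ≥ -(|a||d| + 1)`,
so the trace is at least `(|a| - |d|)² - 2 ≥ -2`. -/

open ComplexConjugate

lemma norm_mul_le_norm_mul_add_one_of_sub_eq_one {𝕜 : Type*} [NormedField 𝕜] {a b c d : 𝕜}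
    (h : a * d - b * c = 1) : ‖b‖ * ‖c‖ ≤ ‖a‖ * ‖d‖ + 1 := by
  calc ‖b‖ * ‖c‖ = ‖a * d - 1‖ := by rw [← norm_mul, ← h, sub_sub_cancel]
    _ ≤ ‖a * d‖ + ‖(1 : 𝕜)‖ := norm_sub_le _ _
    _ = ‖a‖ * ‖d‖ + 1 := by rw [norm_mul, norm_one]

lemma Complex.neg_norm_mul_norm_le_re_mul_conj (b c : ℂ) : -(‖b‖ * ‖c‖) ≤ (b * conj c).re := by
  have h := Complex.abs_re_le_norm (b * conj c)
  rw [norm_mul, Complex.norm_conj] at h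
  exact (abs_le.mp h).1

lemma Matrix.trace_mul_map_conj_fin_two (A : Matrix (Fin 2) (Fin 2) ℂ) :
    (A * A.map conj).trace =
      ((‖A 0 0‖ ^ 2 + ‖A 1 1‖ ^ 2 + 2 * (A 0 1 * conj (A 1 0)).re : ℝ) : ℂ) := by
  rw [Complex.ext_iff]
  simp only [trace_fin_two, mul_apply, map_apply, Fin.sum_univ_two, ← Complex.normSq_eq_norm_sq,
    Complex.normSq_apply, Complex.add_re, Complex.add_im, Complex.mul_re, Complex.mul_im,
    Complex.conj_re, Complex.conj_im, Complex.ofReal_re, Complex.ofReal_im]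
  constructor <;> ring

lemma neg_two_le_norm_sq_add_norm_sq_add_two_re_mul_conj {a b c d : ℂ} (h : a * d - b * c = 1) :
    -2 ≤ ‖a‖ ^ 2 + ‖d‖ ^ 2 + 2 * (b * conj c).re := by
  have hre := Complex.neg_norm_mul_norm_le_re_mul_conj b c
  have hbc := norm_mul_le_norm_mul_add_one_of_sub_eq_one h
  nlinarith [sq_nonneg (‖a‖ - ‖d‖)]

theorem trace_mul_conj_ge_neg_two (A : Matrix (Fin 2) (Fin 2) ℂ) (hA : A.det = 1) :
    ((A * A.map (starRingEnd ℂ)).trace).im = 0 ∧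
      (-2 : ℝ) ≤ ((A * A.map (starRingEnd ℂ)).trace).re := by
  rw [Matrix.trace_mul_map_conj_fin_two, Complex.ofReal_im, Complex.ofReal_re]
  rw [Matrix.det_fin_two] at hA
  exact ⟨rfl, neg_two_le_norm_sq_add_norm_sq_add_two_re_mul_conj hA⟩
end

section
/- If A ∈ SL(2,ℂ) satisfies tr(A · conj(A)) = −2, then A · conj(A) = −Id. -/
private lemma sq_aux (x y : ℂ) (h : x * starRingEnd ℂ x + y * starRingEnd ℂ y = 0) :
    y = 0 := by
  rw [Complex.mul_conj, Complex.mul_conj] at h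
  have h' : Complex.normSq x + Complex.normSq y = 0 := by exact_mod_cast h
  have h2 : Complex.normSq y = 0 := by
    nlinarith [Complex.normSq_nonneg x, Complex.normSq_nonneg y]
  exact Complex.normSq_eq_zero.mp h2

private lemma key (a b c d : ℂ) (had : a * d - b * c = 1)
    (htr : a * starRingEnd ℂ a + b * starRingEnd ℂ c +
      (c * starRingEnd ℂ b + d * starRingEnd ℂ d) = -2) :
    a * starRingEnd ℂ a + b * starRingEnd ℂ c = -1 ∧
    a * starRingEnd ℂ b + b * starRingEnd ℂ d = 0 ∧
    c * starRingEnd ℂ a + d * starRingEnd ℂ c = 0 ∧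
    c * starRingEnd ℂ b + d * starRingEnd ℂ d = -1 := by
  have hadc : (starRingEnd ℂ a) * (starRingEnd ℂ d) - (starRingEnd ℂ b) * (starRingEnd ℂ c) = 1 := by
    have h2 := congrArg (starRingEnd ℂ) had
    simp only [map_sub, map_mul, map_one] at h2
    linear_combination h2
  have hF1 : (a * (starRingEnd ℂ a) + b * (starRingEnd ℂ c) + 1) ^ 2 + (a * (starRingEnd ℂ b) + b * (starRingEnd ℂ d)) * (c * (starRingEnd ℂ a) + d * (starRingEnd ℂ c)) = 0 := by
    linear_combination ((starRingEnd ℂ b) * (starRingEnd ℂ c) - (starRingEnd ℂ a) * (starRingEnd ℂ d)) * had - hadc + ((a * (starRingEnd ℂ a) + b * (starRingEnd ℂ c) + 1) - 1) * htr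
  have hF1s : ((starRingEnd ℂ a) * a + (starRingEnd ℂ b) * c + 1) ^ 2 + ((starRingEnd ℂ a) * b + (starRingEnd ℂ b) * d) * ((starRingEnd ℂ c) * a + (starRingEnd ℂ d) * c) = 0 := by
    linear_combination (b * c - a * d) * hadc - had + (((starRingEnd ℂ a) * a + (starRingEnd ℂ b) * c + 1) - 1) * htr
  have hF4 : a * (((starRingEnd ℂ a) * a + (starRingEnd ℂ b) * c + 1) * (starRingEnd ℂ a) + ((starRingEnd ℂ a) * b + (starRingEnd ℂ b) * d) * (starRingEnd ℂ c)) + b * (((starRingEnd ℂ c) * a + (starRingEnd ℂ d) * c) * (starRingEnd ℂ a) - ((starRingEnd ℂ a) * a + (starRingEnd ℂ b) * c + 1) * (starRingEnd ℂ c)) = -(a * (starRingEnd ℂ a) + b * (starRingEnd ℂ c) + 1) := by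
    linear_combination hF1 - b * (starRingEnd ℂ c) * htr
  have hF5 : c * (((starRingEnd ℂ a) * a + (starRingEnd ℂ b) * c + 1) * (starRingEnd ℂ a) + ((starRingEnd ℂ a) * b + (starRingEnd ℂ b) * d) * (starRingEnd ℂ c)) + d * (((starRingEnd ℂ c) * a + (starRingEnd ℂ d) * c) * (starRingEnd ℂ a) - ((starRingEnd ℂ a) * a + (starRingEnd ℂ b) * c + 1) * (starRingEnd ℂ c)) = -(c * (starRingEnd ℂ a) + d * (starRingEnd ℂ c)) := by
    linear_combination ((c * (starRingEnd ℂ a) + d * (starRingEnd ℂ c)) - d * (starRingEnd ℂ c)) * htr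
  have hF6s : (((starRingEnd ℂ a) * a + (starRingEnd ℂ b) * c + 1) * (starRingEnd ℂ a) + ((starRingEnd ℂ a) * b + (starRingEnd ℂ b) * d) * (starRingEnd ℂ c)) * ((starRingEnd ℂ c) * a + (starRingEnd ℂ d) * c) = (((starRingEnd ℂ c) * a + (starRingEnd ℂ d) * c) * (starRingEnd ℂ a) - ((starRingEnd ℂ a) * a + (starRingEnd ℂ b) * c + 1) * (starRingEnd ℂ c)) * ((starRingEnd ℂ a) * a + (starRingEnd ℂ b) * c + 1) := by
    linear_combination (starRingEnd ℂ c) * hF1s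
  have hKey1 : ((a * (starRingEnd ℂ a) + b * (starRingEnd ℂ c) + 1) * a + (a * (starRingEnd ℂ b) + b * (starRingEnd ℂ d)) * c) * (((starRingEnd ℂ a) * a + (starRingEnd ℂ b) * c + 1) * (starRingEnd ℂ a) + ((starRingEnd ℂ a) * b + (starRingEnd ℂ b) * d) * (starRingEnd ℂ c)) + (a * (starRingEnd ℂ a) + b * (starRingEnd ℂ c) + 1) * ((starRingEnd ℂ a) * a + (starRingEnd ℂ b) * c + 1) = 0 := by
    linear_combination ((starRingEnd ℂ a) * a + (starRingEnd ℂ b) * c + 1) * hF4 + b * hF6s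
  have hKey2 : ((c * (starRingEnd ℂ a) + d * (starRingEnd ℂ c)) * a - (a * (starRingEnd ℂ a) + b * (starRingEnd ℂ c) + 1) * c) * (((starRingEnd ℂ c) * a + (starRingEnd ℂ d) * c) * (starRingEnd ℂ a) - ((starRingEnd ℂ a) * a + (starRingEnd ℂ b) * c + 1) * (starRingEnd ℂ c)) + (c * (starRingEnd ℂ a) + d * (starRingEnd ℂ c)) * ((starRingEnd ℂ c) * a + (starRingEnd ℂ d) * c) = 0 := by
    linear_combination ((starRingEnd ℂ c) * a + (starRingEnd ℂ d) * c) * hF5 - c * hF6s - c * (((starRingEnd ℂ c) * a + (starRingEnd ℂ d) * c) * (starRingEnd ℂ a) - ((starRingEnd ℂ a) * a + (starRingEnd ℂ b) * c + 1) * (starRingEnd ℂ c)) * htr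
  have hF4p : a * (((starRingEnd ℂ a) * a + (starRingEnd ℂ b) * c + 1) * (starRingEnd ℂ b) + ((starRingEnd ℂ a) * b + (starRingEnd ℂ b) * d) * (starRingEnd ℂ d)) + b * (((starRingEnd ℂ c) * a + (starRingEnd ℂ d) * c) * (starRingEnd ℂ b) - ((starRingEnd ℂ a) * a + (starRingEnd ℂ b) * c + 1) * (starRingEnd ℂ d)) = -(a * (starRingEnd ℂ b) + b * (starRingEnd ℂ d)) := by
    linear_combination a * (starRingEnd ℂ b) * htr
  have hF6ps : ((starRingEnd ℂ a) * a + (starRingEnd ℂ b) * c + 1) * (((starRingEnd ℂ a) * a + (starRingEnd ℂ b) * c + 1) * (starRingEnd ℂ b) + ((starRingEnd ℂ a) * b + (starRingEnd ℂ b) * d) * (starRingEnd ℂ d)) + ((starRingEnd ℂ a) * b + (starRingEnd ℂ b) * d) * (((starRingEnd ℂ c) * a + (starRingEnd ℂ d) * c) * (starRingEnd ℂ b) - ((starRingEnd ℂ a) * a + (starRingEnd ℂ b) * c + 1) * (starRingEnd ℂ d)) = 0 := by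
    linear_combination (starRingEnd ℂ b) * hF1s
  have hKey3 : ((a * (starRingEnd ℂ a) + b * (starRingEnd ℂ c) + 1) * b + (a * (starRingEnd ℂ b) + b * (starRingEnd ℂ d)) * d) * (((starRingEnd ℂ a) * a + (starRingEnd ℂ b) * c + 1) * (starRingEnd ℂ b) + ((starRingEnd ℂ a) * b + (starRingEnd ℂ b) * d) * (starRingEnd ℂ d)) + (a * (starRingEnd ℂ b) + b * (starRingEnd ℂ d)) * ((starRingEnd ℂ a) * b + (starRingEnd ℂ b) * d) = 0 := by
    linear_combination ((starRingEnd ℂ a) * b + (starRingEnd ℂ b) * d) * hF4p - b * hF6ps + b * (((starRingEnd ℂ a) * a + (starRingEnd ℂ b) * c + 1) * (starRingEnd ℂ b) + ((starRingEnd ℂ a) * b + (starRingEnd ℂ b) * d) * (starRingEnd ℂ d)) * htr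
  have cT : starRingEnd ℂ ((a * (starRingEnd ℂ a) + b * (starRingEnd ℂ c) + 1) * a + (a * (starRingEnd ℂ b) + b * (starRingEnd ℂ d)) * c) = (((starRingEnd ℂ a) * a + (starRingEnd ℂ b) * c + 1) * (starRingEnd ℂ a) + ((starRingEnd ℂ a) * b + (starRingEnd ℂ b) * d) * (starRingEnd ℂ c)) := by
    simp only [map_add, map_sub, map_mul, map_one, Complex.conj_conj]; try ring
  have cN : starRingEnd ℂ (a * (starRingEnd ℂ a) + b * (starRingEnd ℂ c) + 1) = ((starRingEnd ℂ a) * a + (starRingEnd ℂ b) * c + 1) := by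
    simp only [map_add, map_sub, map_mul, map_one, Complex.conj_conj]; try ring
  have cS : starRingEnd ℂ ((c * (starRingEnd ℂ a) + d * (starRingEnd ℂ c)) * a - (a * (starRingEnd ℂ a) + b * (starRingEnd ℂ c) + 1) * c) = (((starRingEnd ℂ c) * a + (starRingEnd ℂ d) * c) * (starRingEnd ℂ a) - ((starRingEnd ℂ a) * a + (starRingEnd ℂ b) * c + 1) * (starRingEnd ℂ c)) := by
    simp only [map_add, map_sub, map_mul, map_one, Complex.conj_conj]; try ring
  have cQ : starRingEnd ℂ (c * (starRingEnd ℂ a) + d * (starRingEnd ℂ c)) = ((starRingEnd ℂ c) * a + (starRingEnd ℂ d) * c) := by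
    simp only [map_add, map_sub, map_mul, map_one, Complex.conj_conj]; try ring
  have cTp : starRingEnd ℂ ((a * (starRingEnd ℂ a) + b * (starRingEnd ℂ c) + 1) * b + (a * (starRingEnd ℂ b) + b * (starRingEnd ℂ d)) * d) = (((starRingEnd ℂ a) * a + (starRingEnd ℂ b) * c + 1) * (starRingEnd ℂ b) + ((starRingEnd ℂ a) * b + (starRingEnd ℂ b) * d) * (starRingEnd ℂ d)) := by
    simp only [map_add, map_sub, map_mul, map_one, Complex.conj_conj]; try ring
  have cP : starRingEnd ℂ (a * (starRingEnd ℂ b) + b * (starRingEnd ℂ d)) = ((starRingEnd ℂ a) * b + (starRingEnd ℂ b) * d) := by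
    simp only [map_add, map_sub, map_mul, map_one, Complex.conj_conj]; try ring
  have hN : (a * (starRingEnd ℂ a) + b * (starRingEnd ℂ c) + 1) = 0 := sq_aux ((a * (starRingEnd ℂ a) + b * (starRingEnd ℂ c) + 1) * a + (a * (starRingEnd ℂ b) + b * (starRingEnd ℂ d)) * c) (a * (starRingEnd ℂ a) + b * (starRingEnd ℂ c) + 1) (by rw [cT, cN]; exact hKey1)
  have hQ : (c * (starRingEnd ℂ a) + d * (starRingEnd ℂ c)) = 0 := sq_aux ((c * (starRingEnd ℂ a) + d * (starRingEnd ℂ c)) * a - (a * (starRingEnd ℂ a) + b * (starRingEnd ℂ c) + 1) * c) (c * (starRingEnd ℂ a) + d * (starRingEnd ℂ c)) (by rw [cS, cQ]; exact hKey2)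
  have hP : (a * (starRingEnd ℂ b) + b * (starRingEnd ℂ d)) = 0 := sq_aux ((a * (starRingEnd ℂ a) + b * (starRingEnd ℂ c) + 1) * b + (a * (starRingEnd ℂ b) + b * (starRingEnd ℂ d)) * d) (a * (starRingEnd ℂ b) + b * (starRingEnd ℂ d)) (by rw [cTp, cP]; exact hKey3)
  exact ⟨by linear_combination hN, by linear_combination hP,
    by linear_combination hQ, by linear_combination htr - hN⟩

theorem trace_eq_neg_two_imp_neg_id (A : Matrix (Fin 2) (Fin 2) ℂ) (hA : A.det = 1)
    (h : (A * A.map (starRingEnd ℂ)).trace = -2) :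
    A * A.map (starRingEnd ℂ) = -1 := by
  rw [Matrix.det_fin_two] at hA
  simp only [Matrix.trace_fin_two, Matrix.mul_apply, Fin.sum_univ_two,
    Matrix.map_apply] at h
  obtain ⟨h1, h2, h3, h4⟩ := key (A 0 0) (A 0 1) (A 1 0) (A 1 1) hA (by linear_combination h)
  ext i j
  fin_cases i <;> fin_cases j <;>
    simp only [Matrix.mul_apply, Fin.sum_univ_two, Matrix.map_apply, Matrix.neg_apply,
      Matrix.one_apply, Fin.zero_eta, Fin.mk_one, if_true, if_false, Fin.isValue,
      ne_eq, one_ne_zero, zero_ne_one, reduceIte]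
  · linear_combination h1
  · linear_combination h2
  · linear_combination h3
  · linear_combination h4
end

section
/- Let λ be a positive real number with λ ≠ 1 and let B = diag(λ, λ⁻¹) ∈ SL(2,ℂ). Then for A ∈ SL(2,ℂ), A · conj(A) = B if and only if A = diag(a, a⁻¹) for some a ∈ ℂ with |a|² = λ. -/
theorem fiber_hyperbolic (lam : ℝ) (hpos : 0 < lam) (hne : lam ≠ 1)
    (A : Matrix (Fin 2) (Fin 2) ℂ) (hA : A.det = 1) :
    A * A.map (starRingEnd ℂ) = !![(lam : ℂ), 0; 0, (lam : ℂ)⁻¹] ↔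
      ∃ a : ℂ, a * (starRingEnd ℂ) a = (lam : ℂ) ∧ A = !![a, 0; 0, a⁻¹] := by
  have hlam0 : (lam : ℂ) ≠ 0 := by exact_mod_cast hpos.ne'
  have hll : (lam : ℂ) ≠ (lam : ℂ)⁻¹ := by
    intro H
    have : (lam : ℝ) = lam⁻¹ := by exact_mod_cast H
    have h2 : lam * lam = 1 := by field_simp at this; linarith [this]
    have : lam = 1 := by nlinarith
    exact hne this
  set s := starRingEnd ℂ with hs
  constructor
  · intro h
    set a := A 0 0 with ha'; set b := A 0 1 with hb'; set c := A 1 0 with hc'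
    set d := A 1 1 with hd'
    have hdet : a * d - b * c = 1 := by rw [Matrix.det_fin_two] at hA; exact hA
    have e1 : a * s a + b * s c = (lam : ℂ) := by
      have := congrFun (congrFun h 0) 0
      simpa [Matrix.mul_apply, Fin.sum_univ_two, Matrix.map_apply] using this
    have e2 : a * s b + b * s d = 0 := by
      have := congrFun (congrFun h 0) 1
      simpa [Matrix.mul_apply, Fin.sum_univ_two, Matrix.map_apply] using this
    have e3 : c * s a + d * s c = 0 := by
      have := congrFun (congrFun h 1) 0
      simpa [Matrix.mul_apply, Fin.sum_univ_two, Matrix.map_apply] using this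
    have e4 : c * s b + d * s d = (lam : ℂ)⁻¹ := by
      have := congrFun (congrFun h 1) 1
      simpa [Matrix.mul_apply, Fin.sum_univ_two, Matrix.map_apply] using this
    have e3' : s c * a + s d * c = 0 := by
      have := congrArg s e3
      simpa [map_add, map_mul] using this
    have ha0 : a ≠ 0 := by
      intro h0
      have hb0 : b ≠ 0 := by intro hb0; rw [h0, hb0] at hdet; simp at hdet
      have hd0 : d = 0 := by
        have : b * s d = 0 := by rw [h0] at e2; simpa using e2
        have := (mul_eq_zero.mp this).resolve_left hb0
        simpa using this
      have E1 : b * s c = (lam : ℂ) := by rw [h0] at e1; simpa using e1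
      have E4 : c * s b = (lam : ℂ)⁻¹ := by rw [hd0] at e4; simpa using e4
      have : c * s b = (lam : ℂ) := by
        have := congrArg s E1
        simpa [hs, map_mul, Complex.conj_ofReal, mul_comm] using this
      exact hll (this.symm.trans E4)
    have hbc : s b * c = b * s c := by
      have key : a * (s b * c - b * s c) = 0 := by linear_combination c * e2 - b * e3'
      exact sub_eq_zero.mp ((mul_eq_zero.mp key).resolve_left ha0)
    have hnsq : ∀ z : ℂ, z * s z = (Complex.normSq z : ℂ) := fun z => Complex.mul_conj z
    have hb0 : b = 0 := by
      by_contra hb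
      have h2 : a * s b = -(b * s d) := by linear_combination e2
      have hn : Complex.normSq a * Complex.normSq b = Complex.normSq b * Complex.normSq d := by
        have := congrArg Complex.normSq h2
        simpa [hs, Complex.normSq_mul, Complex.normSq_conj] using this
      have hbne : Complex.normSq b ≠ 0 := fun H => hb (Complex.normSq_eq_zero.mp H)
      have had : Complex.normSq a = Complex.normSq d :=
        mul_right_cancel₀ hbne (by linear_combination hn)
      have hC : a * s a = d * s d := by rw [hnsq, hnsq, had]
      have : (lam : ℂ) = (lam : ℂ)⁻¹ := by linear_combination -e1 + e4 + hC - hbc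
      exact hll this
    have hc0 : c = 0 := by
      by_contra hc
      have h3 : c * s a = -(d * s c) := by linear_combination e3
      have hn : Complex.normSq c * Complex.normSq a = Complex.normSq d * Complex.normSq c := by
        have := congrArg Complex.normSq h3
        simpa [hs, Complex.normSq_mul, Complex.normSq_conj] using this
      have hcne : Complex.normSq c ≠ 0 := fun H => hc (Complex.normSq_eq_zero.mp H)
      have had : Complex.normSq a = Complex.normSq d :=
        mul_left_cancel₀ hcne (by linear_combination hn)
      have hC : a * s a = d * s d := by rw [hnsq, hnsq, had]
      have : (lam : ℂ) = (lam : ℂ)⁻¹ := by linear_combination -e1 + e4 + hC - hbc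
      exact hll this
    have hd1 : d = a⁻¹ := by
      have h1 : a * d = 1 := by linear_combination hdet + c * hb0
      field_simp
      linear_combination h1
    refine ⟨a, ?_, ?_⟩
    · rw [hb0] at e1; simpa using e1
    · ext i j
      fin_cases i <;> fin_cases j <;>
        simp [← ha', ← hb', ← hc', ← hd', hb0, hc0, hd1]
  · rintro ⟨a, ha1, rfl⟩
    have ha0 : a ≠ 0 := by
      intro h0; rw [h0] at ha1; simp at ha1; exact hlam0 ha1.symm
    ext i j
    fin_cases i <;> fin_cases j <;>
      simp [Matrix.mul_apply, Fin.sum_univ_two, Matrix.map_apply, ha1, map_inv₀]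
    rw [← mul_inv, ha1]
end

section
/- Let θ ∈ ℝ with sin θ ≠ 0, and let B = diag(e^{iθ}, e^{−iθ}) ∈ SL(2,ℂ). Then for A ∈ SL(2,ℂ), A · conj(A) = B if and only if A = [[0, ρ·e^{i(θ+π)/2}],[−ρ⁻¹·e^{−i(θ+π)/2}, 0]] for some nonzero real number ρ. -/
/-!
Write `A = !![a, b; c, d]`. The off-diagonal entries of `A * conj A = diag(λ, λ̄)` give
`a * (b c̄ - conj (b c̄)) = 0`, and `b c̄` is not real since its imaginary part is that of `λ`;
hence `a = d = 0`. Then `det A = 1` gives `b c = -1`, and with `λ = -u²`, `u = e^{i(θ+π)/2}`,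
the equation `b c̄ = λ` becomes `b = u² b̄`, i.e. `b ū` is a real number `ρ`.
-/

open Complex ComplexConjugate

namespace Complex

theorem eq_zero_and_eq_zero_of_mul_conj {a b c d z : ℂ} (hz : z.im ≠ 0)
    (h00 : a * conj a + b * conj c = z) (h01 : a * conj b + b * conj d = 0)
    (h10 : c * conj a + d * conj c = 0) : a = 0 ∧ d = 0 := by
  have him : (b * conj c).im = z.im := by
    rw [← h00, add_im, mul_conj, ofReal_im, zero_add]
  have hc : conj c ≠ 0 := by
    intro hc
    rw [hc, mul_zero, zero_im] at him
    exact hz him.symm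
  have hdisc : b * conj c - conj (b * conj c) ≠ 0 := by
    rw [sub_conj]
    simpa [him] using hz
  have ha : a = 0 := by
    refine (mul_eq_zero.mp ?_).resolve_right hdisc
    have h10' := congrArg conj h10
    simp only [map_add, map_mul, conj_conj, map_zero] at h10' ⊢
    linear_combination b * h10' - c * h01
  refine ⟨ha, (mul_eq_zero.mp ?_).resolve_right hc⟩
  simpa [ha] using h10

theorem mul_eq_neg_one_and_mul_conj_eq_iff {u b c : ℂ} (hu : conj u * u = 1) :
    b * c = -1 ∧ b * conj c = -u ^ 2 ↔
      ∃ ρ : ℝ, ρ ≠ 0 ∧ b = ρ * u ∧ c = -(ρ : ℂ)⁻¹ * conj u := by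
  have hu_inv : u⁻¹ = conj u := inv_eq_of_mul_eq_one_left hu
  constructor
  · rintro ⟨hbc, hbc'⟩
    have hc : c = (-b)⁻¹ := eq_inv_of_mul_eq_one_right (by rw [neg_mul, hbc, neg_neg])
    have hbc_conj := congrArg conj hbc
    rw [map_mul, map_neg, map_one] at hbc_conj
    obtain ⟨ρ, hρ⟩ : ∃ ρ : ℝ, b * conj u = ρ := by
      refine conj_eq_iff_real.mp ?_
      rw [map_mul, conj_conj]
      linear_combination conj u * (conj b * hbc' - b * hbc_conj) - u * conj b * hu
    have hb : b = ρ * u := by linear_combination u * hρ - b * hu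
    refine ⟨ρ, ?_, hb, ?_⟩
    · rintro rfl
      simp [hb] at hbc
    · rw [hc, hb, inv_neg, mul_inv, hu_inv, neg_mul]
  · rintro ⟨ρ, hρ, rfl, rfl⟩
    have hρ' : (ρ : ℂ) * (ρ : ℂ)⁻¹ = 1 := mul_inv_cancel₀ (ofReal_ne_zero.mpr hρ)
    simp only [map_mul, map_neg, map_inv₀, conj_ofReal, conj_conj]
    constructor
    · linear_combination -(u * conj u) * hρ' - hu
    · linear_combination (-u ^ 2) * hρ'

end Complex

namespace Matrix

variable {α β : Type*}

theorem map_fin_two (f : α → β) (a b c d : α) :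
    (!![a, b; c, d]).map f = !![f a, f b; f c, f d] := by
  ext i j
  fin_cases i <;> fin_cases j <;> rfl

theorem of_fin_two_eq_iff {a b c d a' b' c' d' : α} :
    !![a, b; c, d] = !![a', b'; c', d'] ↔ a = a' ∧ b = b' ∧ c = c' ∧ d = d' := by
  simp [and_assoc]

theorem mul_map_conj_eq_iff_of_det_eq_one {u : ℂ} (hu : conj u * u = 1) (hu2 : (u ^ 2).im ≠ 0)
    {A : Matrix (Fin 2) (Fin 2) ℂ} (hA : A.det = 1) :
    A * A.map conj = !![-u ^ 2, 0; 0, -conj u ^ 2] ↔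
      ∃ ρ : ℝ, ρ ≠ 0 ∧ A = !![0, ρ * u; -(ρ : ℂ)⁻¹ * conj u, 0] := by
  obtain ⟨a, b, c, d, rfl⟩ : ∃ a b c d, A = !![a, b; c, d] := ⟨_, _, _, _, eta_fin_two A⟩
  rw [det_fin_two_of] at hA
  simp only [map_fin_two, mul_fin_two, of_fin_two_eq_iff]
  constructor
  · rintro ⟨h00, h01, h10, -⟩
    obtain ⟨rfl, rfl⟩ :=
      eq_zero_and_eq_zero_of_mul_conj (by rwa [neg_im, neg_ne_zero]) h00 h01 h10
    obtain ⟨ρ, hρ, rfl, rfl⟩ := (mul_eq_neg_one_and_mul_conj_eq_iff (b := b) (c := c) hu).mp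
      ⟨by linear_combination -hA, by simpa using h00⟩
    exact ⟨ρ, hρ, rfl, rfl, rfl, rfl⟩
  · rintro ⟨ρ, hρ, rfl, hb, hc, rfl⟩
    obtain ⟨-, hbc⟩ :=
      (mul_eq_neg_one_and_mul_conj_eq_iff (b := b) (c := c) hu).mpr ⟨ρ, hρ, hb, hc⟩
    refine ⟨by simpa using hbc, by simp, by simp, ?_⟩
    simpa [← map_pow, mul_comm c] using congrArg conj hbc

end Matrix

theorem fiber_elliptic (θ : ℝ) (hθ : Real.sin θ ≠ 0)
    (A : Matrix (Fin 2) (Fin 2) ℂ) (hA : A.det = 1) :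
    A * A.map (starRingEnd ℂ) =
        !![Complex.exp (Complex.I * θ), 0; 0, Complex.exp (-(Complex.I * θ))] ↔
      ∃ ρ : ℝ, ρ ≠ 0 ∧
        A = !![0, (ρ : ℂ) * Complex.exp (Complex.I * ((θ + Real.pi) / 2));
               -(ρ : ℂ)⁻¹ * Complex.exp (-(Complex.I * ((θ + Real.pi) / 2))), 0] := by
  set u := exp (I * ((θ + Real.pi) / 2))
  have hconj : conj u = exp (-(I * ((θ + Real.pi) / 2))) := by
    rw [← exp_conj]; simp [map_ofNat]
  have hsq : u ^ 2 = -exp (I * θ) := by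
    have h2 : ((2 : ℕ) : ℂ) * (I * ((θ + Real.pi) / 2)) = I * θ + Real.pi * I := by
      push_cast; ring
    rw [← exp_nat_mul, h2, exp_add, exp_pi_mul_I, mul_neg_one]
  have hunit : conj u * u = 1 := by rw [hconj, ← exp_add, neg_add_cancel, exp_zero]
  have hsq_conj : conj u ^ 2 = -exp (-(I * θ)) := by
    rw [← map_pow, hsq, map_neg, ← exp_conj]; simp
  have key := Matrix.mul_map_conj_eq_iff_of_det_eq_one hunit
    (by rw [hsq, neg_im, mul_comm, exp_ofReal_mul_I_im]; simpa) hA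
  rwa [hsq, hsq_conj, hconj, neg_neg, neg_neg] at key
end

section
/- Let B = [[1,1],[0,1]] ∈ SL(2,ℂ). Then for A ∈ SL(2,ℂ), A · conj(A) = B if and only if A = [[1, τ],[0,1]] with Re(τ) = 1/2, or A = [[−1, τ],[0,−1]] with Re(τ) = −1/2. -/
theorem fiber_parabolic (A : Matrix (Fin 2) (Fin 2) ℂ) (hA : A.det = 1) :
    A * A.map (starRingEnd ℂ) = !![1, 1; 0, 1] ↔
      (∃ τ : ℂ, τ.re = 1 / 2 ∧ A = !![1, τ; 0, 1]) ∨
      (∃ τ : ℂ, τ.re = -(1 / 2) ∧ A = !![-1, τ; 0, -1]) := by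
  rw [Matrix.det_fin_two] at hA
  constructor
  · intro h
    have e00 := congr_fun (congr_fun h 0) 0
    have e01 := congr_fun (congr_fun h 0) 1
    have e10 := congr_fun (congr_fun h 1) 0
    have e11 := congr_fun (congr_fun h 1) 1
    simp [Matrix.mul_apply, Fin.sum_univ_succ, Matrix.map_apply] at e00 e01 e10 e11
    have ce00 := congrArg (starRingEnd ℂ) e00
    have ce01 := congrArg (starRingEnd ℂ) e01
    simp only [map_add, map_mul, map_one, map_zero, Complex.conj_conj] at ce00 ce01
    have hc0 : A 1 0 = 0 := by
      linear_combination (-(A 1 0)) * ce01 + A 0 1 * e10 + (-(A 1 1)) * e00 + A 1 1 * ce00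
    rw [hc0] at e00 e11 hA
    simp only [mul_zero, zero_mul, map_zero, add_zero, zero_add, sub_zero] at e00 e11 hA
    have ha0 : A 0 0 ≠ 0 := fun h0 => by simp [h0] at hA
    have hdca : A 1 1 = (starRingEnd ℂ) (A 0 0) := by
      have h2 : A 0 0 * (A 1 1 - (starRingEnd ℂ) (A 0 0)) = 0 := by
        linear_combination hA - e00
      rcases mul_eq_zero.mp h2 with h1 | h1
      · exact absurd h1 ha0
      · exact sub_eq_zero.mp h1
    rw [hdca] at e01 ce01
    have key : A 0 0 * (A 0 1 + (starRingEnd ℂ) (A 0 1)) = 1 := by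
      simp only [Complex.conj_conj] at e01
      linear_combination e01
    have key2 : (starRingEnd ℂ) (A 0 0) * (A 0 1 + (starRingEnd ℂ) (A 0 1)) = 1 := by
      linear_combination ce01
    have hbb : A 0 1 + (starRingEnd ℂ) (A 0 1) ≠ 0 := fun h0 => by
      rw [h0, mul_zero] at key; exact one_ne_zero key.symm
    have hac : A 0 0 = (starRingEnd ℂ) (A 0 0) := by
      have h2 : (A 0 0 - (starRingEnd ℂ) (A 0 0)) * (A 0 1 + (starRingEnd ℂ) (A 0 1)) = 0 := by
        linear_combination key - key2
      rcases mul_eq_zero.mp h2 with h1 | h1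
      · exact sub_eq_zero.mp h1
      · exact absurd h1 hbb
    have hsq : A 0 0 * A 0 0 = 1 := by nth_rewrite 2 [hac]; exact e00
    rcases mul_self_eq_one_iff.mp hsq with ha1 | ha1
    · left
      refine ⟨A 0 1, ?_, ?_⟩
      · have hre : A 0 1 + (starRingEnd ℂ) (A 0 1) = 1 := by
          rw [ha1, one_mul] at key; exact key
        have h2 : ((2 * (A 0 1).re : ℝ) : ℂ) = 1 := by
          rw [← Complex.add_conj]; exact hre
        have h3 : 2 * (A 0 1).re = 1 := by exact_mod_cast h2
        linarith
      · ext i j; fin_cases i <;> fin_cases j <;>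
          simp [ha1, hc0, hdca, map_one]
    · right
      refine ⟨A 0 1, ?_, ?_⟩
      · have hre : A 0 1 + (starRingEnd ℂ) (A 0 1) = -1 := by
          rw [ha1] at key; linear_combination -key
        have h2 : ((2 * (A 0 1).re : ℝ) : ℂ) = -1 := by
          rw [← Complex.add_conj]; exact hre
        have h3 : 2 * (A 0 1).re = -1 := by exact_mod_cast h2
        linarith
      · ext i j; fin_cases i <;> fin_cases j <;>
          simp [ha1, hc0, hdca, map_one]
  · rintro (⟨τ, hτ, rfl⟩ | ⟨τ, hτ, rfl⟩) <;>
      ext i j <;> fin_cases i <;> fin_cases j <;>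
      simp [Matrix.mul_apply, Fin.sum_univ_succ, Matrix.map_apply]
    all_goals (apply Complex.ext <;> simp [hτ] <;> ring)
end

section
/- For A ∈ SL(2,ℂ), A · conj(A) = Id if and only if A has the form [[a, b],[c, conj(a)]] with a ∈ ℂ, b and c purely imaginary, and |a|² − bc = 1. -/
theorem fiber_id (A : Matrix (Fin 2) (Fin 2) ℂ) (hA : A.det = 1) :
    A * A.map (starRingEnd ℂ) = 1 ↔
      ∃ a b c : ℂ, b.re = 0 ∧ c.re = 0 ∧ a * (starRingEnd ℂ) a - b * c = 1 ∧
        A = !![a, b; c, (starRingEnd ℂ) a] := by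
  constructor
  · intro h
    have hinv : A⁻¹ = A.map (starRingEnd ℂ) := Matrix.inv_eq_right_inv h
    have hadj : A⁻¹ = A.adjugate := by
      rw [Matrix.inv_def, hA]; simp
    have hAeq : A.map (starRingEnd ℂ) = !![A 1 1, -A 0 1; -A 1 0, A 0 0] := by
      rw [← hinv, hadj, Matrix.adjugate_fin_two]
    have e00 : (starRingEnd ℂ) (A 0 0) = A 1 1 := by
      have := congrFun (congrFun hAeq 0) 0; simpa [Matrix.map_apply] using this
    have e01 : (starRingEnd ℂ) (A 0 1) = -A 0 1 := by
      have := congrFun (congrFun hAeq 0) 1; simpa [Matrix.map_apply] using this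
    have e10 : (starRingEnd ℂ) (A 1 0) = -A 1 0 := by
      have := congrFun (congrFun hAeq 1) 0; simpa [Matrix.map_apply] using this
    refine ⟨A 0 0, A 0 1, A 1 0, ?_, ?_, ?_, ?_⟩
    · have := congrArg Complex.re e01
      simp [Complex.conj_re] at this
      linarith
    · have := congrArg Complex.re e10
      simp [Complex.conj_re] at this
      linarith
    · rw [e00]
      rw [Matrix.det_fin_two] at hA
      exact hA
    · ext i j
      fin_cases i <;> fin_cases j <;> simp [e00]
  · rintro ⟨a, b, c, hb, hc, hdet, rfl⟩
    have hb' : (starRingEnd ℂ) b = -b := by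
      apply Complex.ext <;> simp [hb]
    have hc' : (starRingEnd ℂ) c = -c := by
      apply Complex.ext <;> simp [hc]
    ext i j
    fin_cases i <;> fin_cases j <;>
      simp [Matrix.mul_apply, Fin.sum_univ_two, hb', hc'] <;> ring_nf
    · linear_combination hdet
    · linear_combination hdet
end

section
/- Every A ∈ SL(2,ℂ) with A · conj(A) = Id is of the form g · K · conj(g)⁻¹ for some g ∈ SL(2,ℂ), where K = [[0,i],[i,0]]. -/
/-!
Since `A * conj A = 1`, `K * K = -1` and `conj K = -K`, every matrix `g = P - A * conj P * K`
satisfies `A * conj g = g * K` (the averaging trick of Hilbert's Theorem 90). Taking determinants,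
`det A = det K = 1` forces `det g` to be real. For `P = 1` and `P = !![0, 1; -1, 0]` the two
determinants add up to `2 * (1 + det A) = 4`, so one of them is positive, and rescaling that `g`
by a real number makes its determinant `1`.
-/

open Matrix ComplexConjugate

theorem map_conj_map_conj {m n : Type*} (M : Matrix m n ℂ) : (M.map conj).map conj = M := by
  ext; simp

section ConjIntertwiner

variable {n : Type*} [Fintype n]

def conjIntertwiner (A K P : Matrix n n ℂ) : Matrix n n ℂ :=
  P - A * P.map conj * K

theorem map_conj_conjIntertwiner (A K P : Matrix n n ℂ) :
    (conjIntertwiner A K P).map conj = P.map conj - A.map conj * P * K.map conj := by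
  rw [conjIntertwiner, Matrix.map_sub _ (map_sub _), Matrix.map_mul, Matrix.map_mul,
    map_conj_map_conj]

theorem mul_map_conj_real_smul {A K g : Matrix n n ℂ} (h : A * g.map conj = g * K) (r : ℝ) :
    A * ((r : ℂ) • g).map conj = ((r : ℂ) • g) * K := by
  rw [Matrix.map_smul _ _ (fun z => by simp), Matrix.mul_smul, Matrix.smul_mul, h]

variable [DecidableEq n]

theorem det_map_conj (M : Matrix n n ℂ) : (M.map conj).det = conj M.det :=
  (RingHom.map_det _ M).symm

theorem mul_map_conj_conjIntertwiner {A K : Matrix n n ℂ} (hA : A * A.map conj = 1)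
    (hK : K.map conj = -K) (hKK : K * K = -1) (P : Matrix n n ℂ) :
    A * (conjIntertwiner A K P).map conj = conjIntertwiner A K P * K := by
  rw [map_conj_conjIntertwiner, hK]
  calc A * (P.map conj - A.map conj * P * -K)
      = A * P.map conj + (A * A.map conj) * P * K := by noncomm_ring
    _ = P * K - A * P.map conj * (K * K) := by rw [hA, hKK]; noncomm_ring
    _ = conjIntertwiner A K P * K := by rw [conjIntertwiner]; noncomm_ring

theorem conj_det_eq_of_mul_map_conj_eq {A K g : Matrix n n ℂ} (hA : A.det = 1) (hK : K.det = 1)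
    (h : A * g.map conj = g * K) : conj g.det = g.det := by
  simpa [det_mul, hA, hK, det_map_conj] using congrArg det h

theorem eq_mul_mul_inv_map_conj {A K g : Matrix n n ℂ} (h : A * g.map conj = g * K)
    (hg : g.det = 1) : A = g * K * (g.map conj)⁻¹ := by
  have hg' : IsUnit (g.map conj).det := by simp [det_map_conj, hg]
  rw [← h, mul_nonsing_inv_cancel_right _ _ hg']

end ConjIntertwiner

open Complex in
theorem det_conjIntertwiner_one_add_det_conjIntertwiner_rotation (A : Matrix (Fin 2) (Fin 2) ℂ) :
    (conjIntertwiner A !![0, I; I, 0] 1).det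
      + (conjIntertwiner A !![0, I; I, 0] !![0, 1; -1, 0]).det = 2 * (1 + A.det) := by
  simp [conjIntertwiner, det_fin_two, Matrix.mul_apply, Fin.sum_univ_two]
  linear_combination 2 * (A 0 1 * A 1 0 - A 0 0 * A 1 1) * I_sq

theorem exists_real_sq_mul_eq_one {δ : ℂ} (hδ : conj δ = δ) (hpos : 0 < δ.re) :
    ∃ r : ℝ, (r : ℂ) ^ 2 * δ = 1 := by
  refine ⟨(√δ.re)⁻¹, ?_⟩
  rw [← Complex.conj_eq_iff_re.mp hδ]
  norm_cast
  rw [inv_pow, Real.sq_sqrt hpos.le, inv_mul_cancel₀ hpos.ne']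

theorem fiber_id_orbit (A : Matrix (Fin 2) (Fin 2) ℂ) (hA : A.det = 1)
    (h : A * A.map (starRingEnd ℂ) = 1) :
    ∃ g : Matrix (Fin 2) (Fin 2) ℂ, g.det = 1 ∧
      A = g * !![0, Complex.I; Complex.I, 0] * (g.map (starRingEnd ℂ))⁻¹ := by
  set K : Matrix (Fin 2) (Fin 2) ℂ := !![0, Complex.I; Complex.I, 0]
  have hK : K.map conj = -K := by ext i j; fin_cases i <;> fin_cases j <;> simp [K]
  have hKK : K * K = -1 := by ext i j; fin_cases i <;> fin_cases j <;> simp [K]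
  have hKdet : K.det = 1 := by simp [K, det_fin_two]
  obtain ⟨P, hP⟩ : ∃ P, 0 < (conjIntertwiner A K P).det.re := by
    have hsum := congrArg Complex.re (det_conjIntertwiner_one_add_det_conjIntertwiner_rotation A)
    rw [hA, Complex.add_re] at hsum
    norm_num at hsum
    by_contra! hneg
    linarith [hneg 1, hneg !![0, 1; -1, 0]]
  have hg₀ := mul_map_conj_conjIntertwiner h hK hKK P
  obtain ⟨r, hr⟩ := exists_real_sq_mul_eq_one (conj_det_eq_of_mul_map_conj_eq hA hKdet hg₀) hP
  have hdet : ((r : ℂ) • conjIntertwiner A K P).det = 1 := by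
    rw [det_smul, Fintype.card_fin, hr]
  exact ⟨_, hdet, eq_mul_mul_inv_map_conj (mul_map_conj_real_smul hg₀ r) hdet⟩
end
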